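/- arXiv:2209.13695 — 5 statements merged into one kernel-verified Lean document; each statement's English description precedes it below -/
import Mathlib

section
/- For every natural number k ≥ 1, the formal power series identity ∑_{n≥0} (n+1−k) · n!/(n+1−2k)! · x^n = (1/2) · (2k)! · (1+x) · x^(2k−1) / (1−x)^(2k+1) holds, where terms with n+1−2k < 0 are interpreted as 0. -/
/-!
Write `F_d = ∑ₙ n^{\underline d} xⁿ`. Since `n^{\underline d} = d! · C(n, d)`, the series `F_d` is
`d! xᵈ (1 - x)^{-(d+1)}`. The coefficient `(n + 1 - k) n^{\underline{2k-1}}` splits as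
`n^{\underline{2k}} + k n^{\underline{2k-1}}`, so the left-hand side is
`(2k)! x^{2k} + k (2k-1)! x^{2k-1} (1 - x) = ½ (2k)! (1 + x) x^{2k-1}`.
-/

open PowerSeries

theorem Nat.cast_descFactorial_succ {R : Type*} [CommRing R] (n d : ℕ) :
    (n.descFactorial (d + 1) : R) = ((n : R) - d) * n.descFactorial d := by
  rcases le_or_gt d n with hdn | hnd
  · rw [Nat.descFactorial_succ, Nat.cast_mul, Nat.cast_sub hdn]
  · rw [Nat.descFactorial_of_lt hnd, Nat.descFactorial_of_lt (by omega), Nat.cast_zero,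
      mul_zero]

namespace PowerSeries

variable {R : Type*} [CommRing R]

theorem mk_descFactorial_eq (d : ℕ) :
    (mk fun n => (n.descFactorial d : R)) =
      C (d.factorial : R) * X ^ d * mk fun n => (Nat.choose (d + n) d : R) := by
  ext n
  rw [mul_assoc, coeff_C_mul, coeff_X_pow_mul', coeff_mk]
  split_ifs with hdn
  · rw [coeff_mk, Nat.add_sub_cancel' hdn, ← Nat.cast_mul,
      ← Nat.descFactorial_eq_factorial_mul_choose]
  · rw [Nat.descFactorial_of_lt (by omega), Nat.cast_zero, mul_zero]

theorem mk_descFactorial_mul_one_sub_pow (d : ℕ) :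
    (mk fun n => (n.descFactorial d : R)) * (1 - X) ^ (d + 1) = C (d.factorial : R) * X ^ d := by
  rw [mk_descFactorial_eq, mul_assoc, mk_add_choose_mul_one_sub_pow_eq_one, mul_one]

end PowerSeries

/-- For `k ≥ 1`, `∑_{n≥0} (n+1−k) · n!/(n+1−2k)! · xⁿ = (1/2)(2k)!(1+x)x^{2k−1}/(1−x)^{2k+1}`
as formal power series over `ℚ`, stated with denominators cleared (where
`n!/(n+1−2k)!` is the falling factorial `n·(n−1)⋯(n−2k+2)`, which vanishes when `n+1 < 2k`). -/
theorem stmt_4 (k : ℕ) (hk : 1 ≤ k) :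
    (PowerSeries.mk fun n => (((n : ℚ) + 1 - k) * (n.descFactorial (2 * k - 1) : ℚ))) *
        (1 - PowerSeries.X) ^ (2 * k + 1) =
      PowerSeries.C (((2 * k).factorial : ℚ) / 2) * (1 + PowerSeries.X) *
        PowerSeries.X ^ (2 * k - 1) := by
  obtain ⟨m, rfl⟩ : ∃ m, k = m + 1 := ⟨k - 1, by omega⟩
  have hodd : 2 * (m + 1) - 1 = 2 * m + 1 := by omega
  have heven : 2 * (m + 1) = 2 * m + 1 + 1 := by omega
  have hsplit : (mk fun n => ((n : ℚ) + 1 - (m + 1 : ℕ)) * (n.descFactorial (2 * m + 1) : ℚ)) =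
      (mk fun n => (n.descFactorial (2 * m + 1 + 1) : ℚ)) +
        C ((m + 1 : ℕ) : ℚ) * mk fun n => (n.descFactorial (2 * m + 1) : ℚ) := by
    ext n
    simp only [map_add, coeff_C_mul, coeff_mk, Nat.cast_descFactorial_succ]
    push_cast
    ring
  have hfac : ((2 * m + 1 + 1).factorial : ℚ) / 2 = (m + 1) * (2 * m + 1).factorial := by
    rw [Nat.factorial_succ]
    push_cast
    ring
  rw [hodd, heven, hsplit, add_mul, mk_descFactorial_mul_one_sub_pow, pow_succ _ (2 * m + 1 + 1),
    mul_assoc (C _), ← mul_assoc (mk _), mk_descFactorial_mul_one_sub_pow, hfac,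
    Nat.factorial_succ]
  simp only [map_mul, map_natCast, map_add, map_one]
  push_cast
  ring
end

section
/- Let H(x,y) be the unique formal power series with H(0,y)=0 satisfying H = y·(x·(H+1) + x²·H·(H+1))/(1−x). Then the coefficient of x^n y^k in H equals ∑_{j=0}^{n−k} (1/k)·binomial(k, j+1)·binomial(k, j)·binomial(n−j−1, n−k−j) for all n ≥ k ≥ 1. -/
/-!
Transported to `ℚ⟦x⟧⟦y⟧`, where `1 - x` is a unit, the equation reads `H = y ψ(H)` with
`ψ(u) = x (1 + u) (1 + x u) / (1 - x)`. Lagrange inversion gives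
`k [yᵏ] H = [uᵏ⁻¹] ψᵏ = xᵏ (1 - x)⁻ᵏ ∑ⱼ C(k, j+1) C(k, j) xʲ`, and the coefficient of `xⁿ`
of the right-hand side is the stated sum.
-/

open Finset
open scoped Polynomial

namespace Polynomial

variable {R : Type*} [CommSemiring R]

theorem coeff_derivative_mul (p q : R[X]) (n : ℕ) :
    (derivative p * q).coeff n = ∑ s ∈ range (n + 2), s * p.coeff s * q.coeff (n + 1 - s) := by
  rw [coeff_mul, Nat.sum_antidiagonal_eq_sum_range_succ_mk, sum_range_succ' _ (n + 1)]
  simp only [coeff_derivative, Nat.cast_zero, zero_mul, add_zero]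
  refine sum_congr rfl fun s _ => ?_
  rw [Nat.add_sub_add_right]
  push_cast
  ring

theorem nsmul_derivative_pow_mul_pow (p : R[X]) {m k : ℕ} (hmk : m ≤ k) :
    k • (derivative (p ^ m) * p ^ (k - m)) = m • derivative (p ^ k) := by
  rcases Nat.eq_zero_or_pos m with rfl | hm
  · simp
  have hpow : p ^ (m - 1) * p ^ (k - m) = p ^ (k - 1) := by rw [← pow_add]; congr 1; omega
  simp only [derivative_pow, nsmul_eq_mul, C_eq_natCast, ← hpow]
  ring

theorem coeff_one_add_C_mul_X_pow_mul_one_add_X_pow (c : R) (a b m : ℕ) :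
    ((1 + C c * X) ^ b * (1 + X) ^ a).coeff m =
      ∑ j ∈ range (m + 1), (b.choose j * a.choose (m - j) : ℕ) * c ^ j := by
  have hcomp : (1 + C c * X) ^ b = ((1 + X) ^ b).comp (C c * X) := by
    simp [pow_comp, add_comp]
  rw [hcomp, coeff_mul, Nat.sum_antidiagonal_eq_sum_range_succ
    (fun i j => (((1 + X) ^ b).comp (C c * X)).coeff i * ((1 + X) ^ a).coeff j)]
  refine sum_congr rfl fun j _ => ?_
  simp only [comp_C_mul_X_coeff, coeff_one_add_X_pow]
  push_cast; ring

end Polynomial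

namespace PowerSeries

section LagrangeInversion

variable {S : Type*} [CommSemiring S] {φ : S[X]} {G : S⟦X⟧}

theorem coeff_pow_eq_zero_of_X_dvd (hG : X ∣ G) {n s : ℕ} (hns : n < s) :
    coeff n (G ^ s) = 0 :=
  X_pow_dvd_iff.mp (pow_dvd_pow_of_dvd hG s) n hns

theorem coeff_pow_eq_sum_of_eq_X_mul_eval₂ (hG : G = X * φ.eval₂ C G) {m k : ℕ} (hmk : m ≤ k) :
    coeff k (G ^ m) =
      ∑ s ∈ range (k - m + 1), (φ ^ m).coeff s * coeff (k - m) (G ^ s) := by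
  have hX : X ∣ G := ⟨_, hG⟩
  conv_lhs => rw [hG, mul_pow, ← Polynomial.eval₂_pow, coeff_X_pow_mul', if_pos hmk,
    Polynomial.eval₂_eq_sum_range' C (Nat.lt_add_of_pos_right (k - m).succ_pos), map_sum]
  rw [← sum_range_add_sum_Ico _ (by omega : k - m + 1 ≤ (φ ^ m).natDegree + (k - m + 1)),
    sum_eq_zero (s := Ico _ _) fun s hs => ?_, add_zero]
  · refine sum_congr rfl fun s _ => coeff_C_mul _ _ _
  · rw [coeff_C_mul, coeff_pow_eq_zero_of_X_dvd hX (by simp at hs; omega), mul_zero]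

/- Strong induction on `k`: expanding `G ^ m = X ^ m * φ(G) ^ m` and applying the induction
hypothesis to the lower powers of `G` turns `(k - m) * [X^k] G ^ m` into a coefficient of
`(φ ^ m)' * φ ^ (k - m)`, which is `(m / k) * (φ ^ k)'`. -/
theorem lagrange_inversion [IsAddTorsionFree S] (hG : G = X * φ.eval₂ C G) {m k : ℕ}
    (hm : 1 ≤ m) (hmk : m ≤ k) : (k : S) * coeff k (G ^ m) = m * (φ ^ k).coeff (k - m) := by
  induction k using Nat.strong_induction_on generalizing m with
  | _ k ih =>
  rw [coeff_pow_eq_sum_of_eq_X_mul_eval₂ hG hmk]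
  obtain rfl | hlt := hmk.eq_or_lt
  · simp
  obtain ⟨n, hn⟩ : ∃ n, k - m = n + 1 := ⟨k - m - 1, by omega⟩
  have hterm : ∀ s ∈ range (n + 2),
      ((n + 1 : ℕ) : S) * ((φ ^ m).coeff s * coeff (n + 1) (G ^ s)) =
      s * (φ ^ m).coeff s * (φ ^ (n + 1)).coeff (n + 1 - s) := by
    intro s hs
    rcases Nat.eq_zero_or_pos s with rfl | hs0
    · simp [coeff_one]
    rw [mul_left_comm, ih (n + 1) (by omega) hs0 (by simp at hs; omega)]
    ring
  have hderiv := congrArg (Polynomial.coeff · n) (Polynomial.nsmul_derivative_pow_mul_pow φ hmk)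
  simp only [hn, Polynomial.coeff_smul, Polynomial.coeff_derivative] at hderiv
  rw [nsmul_eq_mul, nsmul_eq_mul] at hderiv
  rw [hn, ← nsmul_right_inj n.succ_ne_zero]
  simp only [nsmul_eq_mul]
  calc ((n + 1 : ℕ) : S) * (k * ∑ s ∈ range (n + 1 + 1), (φ ^ m).coeff s * coeff (n + 1) (G ^ s))
      = k * (Polynomial.derivative (φ ^ m) * φ ^ (n + 1)).coeff n := by
        rw [mul_left_comm, mul_sum, sum_congr rfl hterm, Polynomial.coeff_derivative_mul]
    _ = ((n + 1 : ℕ) : S) * (m * (φ ^ k).coeff (n + 1)) := by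
        rw [hderiv]; push_cast; ring

end LagrangeInversion

section Psi

variable (R : Type*) [CommRing R]

/-- The paper's `ψ(u) = x (u + 1) (1 + x u) / (1 - x)`, a polynomial in `u` over `R⟦x⟧`, where
`1 / (1 - x) = mk 1`. -/
noncomputable def psi : R⟦X⟧[X] :=
  Polynomial.C (X * mk 1) * ((Polynomial.X + 1) * (1 + Polynomial.C X * Polynomial.X))

variable {R}

theorem eq_X_mul_eval₂_psi {G : R⟦X⟧⟦X⟧}
    (hG : (1 - C X) * G = X * (C X * (G + 1) + C X ^ 2 * G * (G + 1))) :
    G = X * (psi R).eval₂ C G := by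
  have hinv : C (mk 1) * (1 - C X) = (1 : R⟦X⟧⟦X⟧) := by
    rw [← map_one C, ← map_sub, ← map_mul, mk_one_mul_one_sub_eq_one]
  calc G = C (mk 1) * ((1 - C X) * G) := by rw [← mul_assoc, hinv, one_mul]
    _ = X * (psi R).eval₂ C G := by
      rw [hG]; simp only [psi, Polynomial.eval₂_mul, Polynomial.eval₂_add, Polynomial.eval₂_C,
        Polynomial.eval₂_X, Polynomial.eval₂_one, map_mul]; ring

theorem coeff_psi_pow {k : ℕ} (hk : 1 ≤ k) :
    (psi R ^ k).coeff (k - 1) =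
      X ^ k * ((mk fun j => (k.choose (j + 1) * k.choose j : R)) * mk 1 ^ k) := by
  have hcoeff : ((1 + Polynomial.C X * Polynomial.X) ^ k * (Polynomial.X + 1) ^ k).coeff (k - 1) =
      mk fun j => (k.choose (j + 1) * k.choose j : R) := by
    ext j
    rw [add_comm Polynomial.X, Polynomial.coeff_one_add_C_mul_X_pow_mul_one_add_X_pow, map_sum]
    simp only [← map_natCast (C (R := R)), coeff_C_mul_X_pow, sum_ite_eq, mem_range, coeff_mk]
    split_ifs with hj
    · rw [Nat.choose_symm_of_eq_add (show k = (k - 1 - j) + (j + 1) by omega)]; push_cast; ring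
    · rw [Nat.choose_eq_zero_of_lt (by omega : k < j + 1)]; simp
  rw [psi, mul_pow, mul_pow, ← Polynomial.C_pow, Polynomial.coeff_C_mul,
    mul_comm ((Polynomial.X + 1) ^ k), hcoeff]
  ring

theorem coeff_coeff_psi_pow {n k : ℕ} (hk : 1 ≤ k) (hkn : k ≤ n) :
    coeff n ((psi R ^ k).coeff (k - 1)) =
      ∑ j ∈ range (n - k + 1),
        (k.choose (j + 1) * k.choose j * (n - j - 1).choose (n - k - j) : R) := by
  obtain ⟨d, rfl⟩ : ∃ d, k = d + 1 := ⟨k - 1, by omega⟩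
  rw [coeff_psi_pow hk, coeff_X_pow_mul', if_pos hkn, mk_one_pow_eq_mk_choose_add, coeff_mul,
    Nat.sum_antidiagonal_eq_sum_range_succ (fun i j => coeff i (mk _) * coeff j (mk _))]
  refine sum_congr rfl fun j hj => ?_
  rw [mem_range] at hj
  rw [coeff_mk, coeff_mk, Nat.choose_symm_add, show d + (n - (d + 1) - j) = n - j - 1 by omega]

end Psi

end PowerSeries

def finTwoEquivOptionUnit : Fin 2 ≃ Option Unit where
  toFun := ![some (), none]
  invFun o := o.elim 1 fun _ => 0
  left_inv i := by fin_cases i <;> rfl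
  right_inv o := by rcases o with _ | _ <;> rfl

namespace MvPowerSeries

variable (R : Type*) [CommSemiring R]

noncomputable def finTwoEquiv : MvPowerSeries (Fin 2) R ≃ₐ[R] PowerSeries (PowerSeries R) :=
  (renameEquiv R finTwoEquivOptionUnit).trans (optionEquivLeft Unit R)

variable {R}

theorem coeff_coeff_finTwoEquiv (F : MvPowerSeries (Fin 2) R) (n k : ℕ) :
    PowerSeries.coeff n (PowerSeries.coeff k (finTwoEquiv R F)) =
      coeff (Finsupp.single 0 n + Finsupp.single 1 k) F := by
  have hexp : (Finsupp.single () n).optionElim k = Finsupp.embDomain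
      finTwoEquivOptionUnit.toEmbedding (Finsupp.single 0 n + Finsupp.single 1 k) := by
    ext (_ | _) <;> simp [finTwoEquivOptionUnit]
  rw [PowerSeries.coeff_def (s := Finsupp.single () n) (by simp), finTwoEquiv,
    AlgEquiv.trans_apply, coeff_coeff_optionEquivLeft, hexp]
  exact coeff_embDomain_rename _ _ _

@[simp]
theorem finTwoEquiv_X_zero : finTwoEquiv R (X 0) = PowerSeries.C PowerSeries.X := by
  change optionEquivLeft Unit R (rename finTwoEquivOptionUnit (X 0)) = _
  rw [rename_X]
  exact optionEquivLeft_X_some ()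

@[simp]
theorem finTwoEquiv_X_one : finTwoEquiv R (X 1) = PowerSeries.X := by
  change optionEquivLeft Unit R (rename finTwoEquivOptionUnit (X 1)) = _
  rw [rename_X]
  exact optionEquivLeft_X_none

end MvPowerSeries

open MvPowerSeries

theorem stmt_9_general (H : MvPowerSeries (Fin 2) ℚ)
    (hH : (1 - MvPowerSeries.X (0 : Fin 2)) * H =
      MvPowerSeries.X 1 * (MvPowerSeries.X 0 * (H + 1) +
        MvPowerSeries.X 0 ^ 2 * H * (H + 1)))
    (n k : ℕ) (hk : 1 ≤ k) (hkn : k ≤ n) :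
    MvPowerSeries.coeff (Finsupp.single 0 n + Finsupp.single 1 k) H =
      ∑ j ∈ Finset.range (n - k + 1),
        (1 / (k : ℚ)) * (k.choose (j + 1) : ℚ) * (k.choose j : ℚ) *
          ((n - j - 1).choose (n - k - j) : ℚ) := by
  have : IsAddTorsionFree (PowerSeries ℚ) := .of_module_rat _
  set G := finTwoEquiv ℚ H
  have hG : G = PowerSeries.X * (PowerSeries.psi ℚ).eval₂ PowerSeries.C G :=
    PowerSeries.eq_X_mul_eval₂_psi (by simpa using congrArg (finTwoEquiv ℚ) hH)
  have hlag := congrArg (PowerSeries.coeff n) (PowerSeries.lagrange_inversion hG le_rfl hk)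
  rw [pow_one, Nat.cast_one, one_mul, ← map_natCast PowerSeries.C, PowerSeries.coeff_C_mul,
    coeff_coeff_finTwoEquiv, PowerSeries.coeff_coeff_psi_pow hk hkn] at hlag
  simp only [mul_assoc (1 / (k : ℚ)), ← Finset.mul_sum, ← hlag]
  field_simp

/-- The unique power series `H(x,y)` with `H(0,y) = 0` satisfying
`H = y(x(H+1) + x²H(H+1))/(1−x)` (stated with the denominator cleared) has coefficient of
`xⁿyᵏ` equal to `∑_{j=0}^{n−k} (1/k)·C(k,j+1)·C(k,j)·C(n−j−1, n−k−j)` for `n ≥ k ≥ 1`. -/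
theorem stmt_9 (H : MvPowerSeries (Fin 2) ℚ)
    (h0 : ∀ k : ℕ, MvPowerSeries.coeff (Finsupp.single 1 k) H = 0)
    (hH : (1 - MvPowerSeries.X (0 : Fin 2)) * H =
      MvPowerSeries.X 1 * (MvPowerSeries.X 0 * (H + 1) +
        MvPowerSeries.X 0 ^ 2 * H * (H + 1)))
    (n k : ℕ) (hk : 1 ≤ k) (hkn : k ≤ n) :
    MvPowerSeries.coeff (Finsupp.single 0 n + Finsupp.single 1 k) H =
      ∑ j ∈ Finset.range (n - k + 1),
        (1 / (k : ℚ)) * (k.choose (j + 1) : ℚ) * (k.choose j : ℚ) *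
          ((n - j - 1).choose (n - k - j) : ℚ) :=
  stmt_9_general H hH n k hk hkn
end

section
/- A Dyck path μ of semilength n+1 lies in the image of the upward pop-stack (rowmotion-type) operator on the lattice J(Φ⁺_{A_n}) of order ideals of the type A root poset if and only if μ contains no four consecutive steps fall-fall-rise-rise and the only lattice points of μ on the x-axis are its two endpoints (0,0) and (2n+2, 0). -/
/-- `h : ℕ → ℤ` is the height function of a Dyck path of semilength `m`:
it starts at 0, stays nonnegative, moves by `±1` at each of the `2m` steps,
and is 0 from position `2m` on. -/
def IsDyckHeight (m : ℕ) (h : ℕ → ℤ) : Prop :=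
  h 0 = 0 ∧ (∀ i, 2 * m ≤ i → h i = 0) ∧ (∀ i, 0 ≤ h i) ∧
    ∀ i < 2 * m, h (i + 1) - h i = 1 ∨ h (i + 1) - h i = -1

/-- Dyck paths of semilength `m`, ordered pointwise by their height functions.
This poset is isomorphic to the lattice `J(Φ⁺_{A_{m-1}})` of order ideals of the
type `A_{m-1}` root poset. -/
abbrev DyckPath (m : ℕ) := {h : ℕ → ℤ // IsDyckHeight m h}

/-- The path has no four consecutive steps fall-fall-rise-rise. -/
def NoFFRR (m : ℕ) (h : ℕ → ℤ) : Prop :=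
  ¬ ∃ i, i + 4 ≤ 2 * m ∧ h (i + 1) = h i - 1 ∧ h (i + 2) = h (i + 1) - 1 ∧
      h (i + 3) = h (i + 2) + 1 ∧ h (i + 4) = h (i + 3) + 1

/-- The only lattice points of the path on the x-axis are its two endpoints. -/
def OnlyEndpointsOnAxis (m : ℕ) (h : ℕ → ℤ) : Prop :=
  ∀ i, 0 < i → i < 2 * m → 0 < h i

/-!
A cover `ν ⋖ z` raises a single valley `fr` of `ν` to a peak `rf`: if `ν < z`, a lowest point of
`ν` strictly below `z` is a valley of `ν`, and by parity `z` exceeds `ν` there by at least 2.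
Hence `Pop^↑ ν` raises all valleys of `ν` at once. A raised valley becomes a peak, so every
valley of `Pop^↑ ν` is next to a peak, which excludes `ffrr`; and an interior point of
`Pop^↑ ν` on the axis would have been a valley of `ν`. Conversely, if `μ` satisfies both
conditions, lowering every peak of `μ` of height at least 2 gives a Dyck path whose valleys are
exactly these points, so that `Pop^↑` sends it back to `μ`.
-/

def IsTurn (d : ℤ) (h : ℕ → ℤ) (i : ℕ) : Prop :=
  0 < i ∧ h (i - 1) = h i + d ∧ h (i + 1) = h i + d

abbrev IsValley : (ℕ → ℤ) → ℕ → Prop := IsTurn 1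

abbrev IsPeak : (ℕ → ℤ) → ℕ → Prop := IsTurn (-1)

def valleys (h : ℕ → ℤ) : Set ℕ := {i | IsValley h i}

section Turns

variable {d : ℤ} {h : ℕ → ℤ} {S : Set ℕ} {i k : ℕ}

theorem isTurn_succ_iff :
    IsTurn d h (k + 1) ↔ h k = h (k + 1) + d ∧ h (k + 2) = h (k + 1) + d := by
  simp [IsTurn]

theorem IsTurn.not_isTurn_succ (hd : d ≠ 0) (hi : IsTurn d h i) :
    ¬ IsTurn d h (i + 1) := by
  rw [isTurn_succ_iff]
  have := hi.2.2
  omega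

open Classical in
noncomputable def flipOn (S : Set ℕ) (d : ℤ) (h : ℕ → ℤ) (j : ℕ) : ℤ :=
  if j ∈ S then h j + 2 * d else h j

theorem flipOn_of_mem (hi : i ∈ S) : flipOn S d h i = h i + 2 * d := if_pos hi

theorem flipOn_of_notMem (hi : i ∉ S) : flipOn S d h i = h i := if_neg hi

theorem flipOn_flipOn_neg : flipOn S d (flipOn S (-d) h) = h := by
  funext j
  by_cases hj : j ∈ S
  · rw [flipOn_of_mem hj, flipOn_of_mem hj]; ring
  · rw [flipOn_of_notMem hj, flipOn_of_notMem hj]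

theorem isTurn_flipOn (hd : d ≠ 0) (hS : ∀ j ∈ S, IsTurn d h j) (hi : i ∈ S) :
    IsTurn (-d) (flipOn S d h) i := by
  obtain ⟨k, rfl⟩ : ∃ k, i = k + 1 := Nat.exists_eq_add_one.mpr (hS i hi).1
  have hk : k ∉ S := fun hk => (hS k hk).not_isTurn_succ hd (hS _ hi)
  have hk2 : k + 2 ∉ S := (hS _ hi).not_isTurn_succ hd ∘ hS _
  have := isTurn_succ_iff.mp (hS _ hi)
  rw [isTurn_succ_iff, flipOn_of_mem hi, flipOn_of_notMem hk, flipOn_of_notMem hk2]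
  omega

end Turns

namespace IsDyckHeight

variable {m : ℕ} {d : ℤ} {g h : ℕ → ℤ} {S : Set ℕ} {i : ℕ}

theorem step (hh : IsDyckHeight m h) (hi : i < 2 * m) :
    h (i + 1) = h i + 1 ∨ h (i + 1) = h i - 1 := by
  have := hh.2.2.2 i hi
  omega

theorem abs_step_le (hh : IsDyckHeight m h) (i : ℕ) : |h (i + 1) - h i| ≤ 1 := by
  by_cases hi : i < 2 * m
  · rcases hh.step hi with e | e <;> simp [e]
  · simp [hh.2.1 i (by omega), hh.2.1 (i + 1) (by omega)]

theorem lt_of_isTurn (hh : IsDyckHeight m h) (hd : d ≠ 0) (hi : IsTurn d h i) :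
    i < 2 * m := by
  by_contra! hle
  have := hi.2.2
  rw [hh.2.1 i hle, hh.2.1 (i + 1) (by omega)] at this
  omega

theorem even_sub (hg : IsDyckHeight m g) (hh : IsDyckHeight m h) (j : ℕ) :
    Even (g j - h j) := by
  rw [Int.even_iff]
  induction j with
  | zero => simp [hg.1, hh.1]
  | succ k ih =>
    by_cases hk : k < 2 * m
    · rcases hg.step hk with e | e <;> rcases hh.step hk with e' | e' <;> omega
    · simp [hg.2.1 (k + 1) (by omega), hh.2.1 (k + 1) (by omega)]

theorem flipOn_of_isTurn (hh : IsDyckHeight m h) (hS : ∀ j ∈ S, IsTurn d h j ∧ 0 ≤ h j + 2 * d) :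
    IsDyckHeight m (flipOn S d h) := by
  obtain ⟨h0, hend, hnonneg, hstep⟩ := hh
  have hleft (j) (hj : j ∈ S) : h (j + 1) = h j + d := (hS j hj).1.2.2
  have hright (j) (hj : j + 1 ∈ S) : h j = h (j + 1) + d := (isTurn_succ_iff.mp (hS _ hj).1).1
  refine ⟨?_, fun j hj => ?_, fun j => ?_, fun j hj => ?_⟩
  · rw [flipOn_of_notMem fun h0S => (hS 0 h0S).1.1.false, h0]
  · by_cases hjS : j ∈ S
    · have := hleft j hjS
      rw [hend j hj, hend (j + 1) (by omega)] at this
      rw [flipOn_of_mem hjS, hend j hj]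
      omega
    · rw [flipOn_of_notMem hjS, hend j hj]
  · by_cases hjS : j ∈ S
    · rw [flipOn_of_mem hjS]
      exact (hS j hjS).2
    · rw [flipOn_of_notMem hjS]
      exact hnonneg j
  · have := hstep j hj
    by_cases hjS : j ∈ S <;> by_cases hj1 : j + 1 ∈ S
    · rwa [flipOn_of_mem hjS, flipOn_of_mem hj1, add_sub_add_right_eq_sub]
    · have := hleft j hjS
      rw [flipOn_of_mem hjS, flipOn_of_notMem hj1]
      omega
    · have := hright j hj1
      rw [flipOn_of_notMem hjS, flipOn_of_mem hj1]
      omega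
    · rwa [flipOn_of_notMem hjS, flipOn_of_notMem hj1]

theorem flipOn_of_subset_valleys (hh : IsDyckHeight m h) (hS : S ⊆ valleys h) :
    IsDyckHeight m (flipOn S 1 h) :=
  hh.flipOn_of_isTurn fun j hj => ⟨hS hj, by linarith [hh.2.2.1 j]⟩

theorem exists_isValley_flipOn_le {ν z : ℕ → ℤ} (hν : IsDyckHeight m ν) (hz : IsDyckHeight m z)
    (hlt : ν < z) : ∃ i, IsValley ν i ∧ flipOn {i} 1 ν ≤ z := by
  obtain ⟨hle, j₀, hj₀⟩ := Pi.lt_def.mp hlt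
  have hbelow : {j | ν j < z j} ⊆ Set.Iio (2 * m) := fun j (hj : ν j < z j) => by
    by_contra! hj'
    rw [Set.mem_Iio, not_lt] at hj'
    rw [hν.2.1 j hj', hz.2.1 j hj'] at hj
    exact hj.false
  -- a lowest point of `ν` strictly below `z` is a valley of `ν`
  obtain ⟨i, hi, hmin⟩ :=
    Set.exists_min_image _ ν ((Set.finite_Iio _).subset hbelow) ⟨j₀, hj₀⟩
  have hi2m : i < 2 * m := hbelow hi
  replace hi : ν i < z i := hi
  replace hmin (j) (hj : ν j < z j) : ν i ≤ ν j := hmin j hj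
  obtain ⟨k, rfl⟩ : ∃ k, i = k + 1 := Nat.exists_eq_add_one.mpr <| Nat.pos_of_ne_zero fun h0 => by
    rw [h0, hν.1, hz.1] at hi
    exact hi.false
  have hleft : ν k = ν (k + 1) + 1 := by
    have := abs_le.mp (hz.abs_step_le k)
    have := hmin k
    rcases hν.step (by omega : k < 2 * m) with e | e <;> omega
  have hright : ν (k + 2) = ν (k + 1) + 1 := by
    have hzstep : |z (k + 2) - z (k + 1)| ≤ 1 := hz.abs_step_le (k + 1)
    rw [abs_le] at hzstep
    have hνstep : ν (k + 2) = ν (k + 1) + 1 ∨ ν (k + 2) = ν (k + 1) - 1 := hν.step hi2m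
    have := hmin (k + 2)
    omega
  refine ⟨k + 1, isTurn_succ_iff.mpr ⟨hleft, hright⟩, Pi.le_def.mpr fun j => ?_⟩
  obtain rfl | hj := eq_or_ne j (k + 1)
  · have := Int.even_iff.mp (hz.even_sub hν (k + 1))
    rw [flipOn_of_mem (Set.mem_singleton _)]
    omega
  · rw [flipOn_of_notMem (S := {k + 1}) hj]
    exact hle j

end IsDyckHeight

namespace DyckPath

variable {m : ℕ} {ν z : DyckPath m} {S T : Set ℕ} {i : ℕ}

noncomputable def raise (ν : DyckPath m) (S : Set ℕ) (hS : S ⊆ valleys ν.1) : DyckPath m :=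
  ⟨flipOn S 1 ν.1, ν.2.flipOn_of_subset_valleys hS⟩

theorem raise_mono (hS : S ⊆ valleys ν.1) (hT : T ⊆ valleys ν.1)
    (hST : S ⊆ T) : ν.raise S hS ≤ ν.raise T hT := fun j => by
  by_cases hjS : j ∈ S
  · simp only [raise, flipOn_of_mem hjS, flipOn_of_mem (hST hjS), le_refl]
  · by_cases hjT : j ∈ T
    · simp only [raise, flipOn_of_notMem hjS, flipOn_of_mem hjT]; omega
    · simp only [raise, flipOn_of_notMem hjS, flipOn_of_notMem hjT, le_refl]

theorem le_raise (hS : S ⊆ valleys ν.1) : ν ≤ ν.raise S hS := fun j => by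
  by_cases hj : j ∈ S
  · simp only [raise, flipOn_of_mem hj]; omega
  · simp only [raise, flipOn_of_notMem hj, le_refl]

theorem lt_raise (hS : S ⊆ valleys ν.1) (hi : i ∈ S) : ν < ν.raise S hS := by
  refine (le_raise hS).lt_of_ne fun h => ?_
  have := congr_arg (fun z : DyckPath m => z.1 i) h
  simp only [raise, flipOn_of_mem hi] at this
  omega

theorem covBy_iff :
    ν ⋖ z ↔ ∃ i, ∃ hi : IsValley ν.1 i, z = ν.raise {i} (Set.singleton_subset_iff.mpr hi) := by
  constructor
  · intro hc
    obtain ⟨i, hi, hle⟩ := ν.2.exists_isValley_flipOn_le z.2 hc.lt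
    have hle : ν.raise {i} (Set.singleton_subset_iff.mpr hi) ≤ z := hle
    exact ⟨i, hi, (eq_of_le_of_not_lt hle (hc.2 (lt_raise _ (Set.mem_singleton _)))).symm⟩
  · rintro ⟨i, hi, rfl⟩
    refine ⟨lt_raise _ (Set.mem_singleton _), fun w hνw hwr => ?_⟩
    obtain ⟨j, -, hjw⟩ := ν.2.exists_isValley_flipOn_le w.2 hνw
    obtain rfl : j = i := by
      by_contra hji
      have := (hjw j).trans (hwr.le j)
      rw [flipOn_of_mem (Set.mem_singleton _)] at this
      simp only [raise, flipOn_of_notMem (S := {i}) hji] at this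
      omega
    exact hwr.not_ge hjw

noncomputable def pop (ν : DyckPath m) : DyckPath m := ν.raise (valleys ν.1) subset_rfl

theorem isLUB_pop (ν : DyckPath m) : IsLUB (insert ν {z | ν ⋖ z}) ν.pop := by
  refine ⟨?_, fun w hw j => ?_⟩
  · rintro z (rfl | hz)
    · exact le_raise _
    · obtain ⟨i, hi, rfl⟩ := covBy_iff.mp hz
      exact raise_mono _ _ (Set.singleton_subset_iff.mpr hi)
  · by_cases hj : j ∈ valleys ν.1
    · have := hw (Set.mem_insert_of_mem _ (covBy_iff.mpr ⟨j, hj, rfl⟩)) j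
      simpa only [raise, flipOn_of_mem (Set.mem_singleton _), pop, flipOn_of_mem hj] using this
    · simpa only [pop, raise, flipOn_of_notMem hj] using hw (Set.mem_insert _ _) j

end DyckPath

section Image

variable {m : ℕ} {h : ℕ → ℤ}

theorem isPeak_flipOn_valleys {i : ℕ} (hi : i ∈ valleys h) : IsPeak (flipOn (valleys h) 1 h) i :=
  isTurn_flipOn one_ne_zero (fun _ hj => hj) hi

theorem isValley_or_isValley_of_isValley_flipOn {k : ℕ}
    (hk : IsValley (flipOn (valleys h) 1 h) (k + 1)) : IsValley h k ∨ IsValley h (k + 2) := by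
  by_contra! hne
  have hk1 : k + 1 ∉ valleys h := fun hv => by
    have := isTurn_succ_iff.mp (isPeak_flipOn_valleys hv)
    have := isTurn_succ_iff.mp hk
    omega
  have := isTurn_succ_iff.mp hk
  rw [flipOn_of_notMem hne.1, flipOn_of_notMem hk1, flipOn_of_notMem hne.2] at this
  exact hk1 (isTurn_succ_iff.mpr this)

theorem noFFRR_flipOn_valleys (m : ℕ) (h : ℕ → ℤ) : NoFFRR m (flipOn (valleys h) 1 h) := by
  set g := flipOn (valleys h) 1 h
  rintro ⟨i, -, e1, e2, e3, e4⟩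
  have hvalley : IsValley g (i + 2) :=
    isTurn_succ_iff.mpr (show g (i + 1) = g (i + 2) + 1 ∧ g (i + 3) = g (i + 2) + 1 by omega)
  -- a raised valley becomes a peak, and there is none at `i + 1` or `i + 3`
  rcases isValley_or_isValley_of_isValley_flipOn hvalley with hv | hv
  · have : g i = g (i + 1) + -1 ∧ _ := isTurn_succ_iff.mp (isPeak_flipOn_valleys hv)
    omega
  · have : _ ∧ g (i + 4) = g (i + 3) + -1 := isTurn_succ_iff.mp (isPeak_flipOn_valleys hv)
    omega

theorem IsDyckHeight.onlyEndpointsOnAxis_flipOn_valleys (hh : IsDyckHeight m h) :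
    OnlyEndpointsOnAxis m (flipOn (valleys h) 1 h) := by
  intro i hi0 hi
  by_cases hv : i ∈ valleys h
  · rw [flipOn_of_mem hv]
    linarith [hh.2.2.1 i]
  · rw [flipOn_of_notMem hv]
    obtain ⟨k, rfl⟩ := Nat.exists_eq_add_one.mpr hi0
    refine (hh.2.2.1 _).lt_of_ne' fun h0 => hv (isTurn_succ_iff.mpr ?_)
    have := hh.2.2.1 k
    have := hh.2.2.1 (k + 2)
    have hstep : h (k + 2) = h (k + 1) + 1 ∨ h (k + 2) = h (k + 1) - 1 := hh.step hi
    rcases hh.step (by omega : k < 2 * m) with e | e <;> omega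

def tallPeaks (h : ℕ → ℤ) : Set ℕ := {i | IsPeak h i ∧ 2 ≤ h i}

theorem IsDyckHeight.flipOn_tallPeaks (hh : IsDyckHeight m h) :
    IsDyckHeight m (flipOn (tallPeaks h) (-1) h) :=
  hh.flipOn_of_isTurn fun _ hj => ⟨hj.1, by linarith [hj.2]⟩

theorem IsDyckHeight.mem_tallPeaks_of_isValley (hh : IsDyckHeight m h) (hff : NoFFRR m h)
    (hax : OnlyEndpointsOnAxis m h) {k : ℕ} (hv : IsValley h (k + 1)) :
    k ∈ tallPeaks h ∨ k + 2 ∈ tallPeaks h := by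
  by_contra! hne
  have hlt : k + 1 < 2 * m := hh.lt_of_isTurn one_ne_zero hv
  obtain ⟨l, rfl⟩ : ∃ l, k = l + 1 := Nat.exists_eq_add_one.mpr <| Nat.pos_of_ne_zero fun hk => by
    subst hk
    have : h 0 = h 1 + 1 := (isTurn_succ_iff.mp hv).1
    have := hh.1
    have := hh.2.2.1 1
    omega
  have hpos : 0 < h (l + 2) := hax _ (by omega) hlt
  obtain ⟨hl, hr⟩ : h (l + 1) = h (l + 2) + 1 ∧ h (l + 3) = h (l + 2) + 1 := isTurn_succ_iff.mp hv
  -- both neighbours have height at least 2 and are not peaks, so the path goes on falling to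
  -- the left and rising to the right
  have hfall : h l = h (l + 1) + 1 := by
    have hs : h (l + 1) = h l + 1 ∨ h (l + 1) = h l - 1 := hh.step (by omega)
    refine hs.elim (fun e => absurd ⟨?_, by omega⟩ hne.1) (by omega)
    exact isTurn_succ_iff.mpr (show h l = h (l + 1) + -1 ∧ h (l + 2) = h (l + 1) + -1 by omega)
  have hl3 : l + 3 < 2 * m := by
    by_contra! hle
    have := hh.2.1 _ hle
    omega
  have hrise : h (l + 4) = h (l + 3) + 1 := by
    have hs : h (l + 4) = h (l + 3) + 1 ∨ h (l + 4) = h (l + 3) - 1 := hh.step hl3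
    refine hs.elim id (fun e => absurd ⟨?_, show 2 ≤ h (l + 3) by omega⟩ hne.2)
    exact isTurn_succ_iff.mpr
      (show h (l + 2) = h (l + 3) + -1 ∧ h (l + 4) = h (l + 3) + -1 by omega)
  exact hff ⟨l, by omega, by omega, by omega, by omega, by omega⟩

theorem IsDyckHeight.valleys_flipOn_tallPeaks (hh : IsDyckHeight m h) (hff : NoFFRR m h)
    (hax : OnlyEndpointsOnAxis m h) : valleys (flipOn (tallPeaks h) (-1) h) = tallPeaks h := by
  ext j
  refine ⟨fun hj => ?_, fun hj => show IsValley _ j by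
    simpa only [neg_neg] using isTurn_flipOn (neg_ne_zero.mpr one_ne_zero) (fun _ hj => hj.1) hj⟩
  by_contra hjT
  obtain ⟨k, rfl⟩ := Nat.exists_eq_add_one.mpr hj.1
  obtain ⟨hl, hr⟩ := isTurn_succ_iff.mp hj
  rw [flipOn_of_notMem hjT] at hl hr
  have hstepl : |h (k + 1) - h k| ≤ 1 := hh.abs_step_le k
  have hstepr : |h (k + 2) - h (k + 1)| ≤ 1 := hh.abs_step_le (k + 1)
  rw [abs_le] at hstepl hstepr
  -- a lowered neighbour would make a step of height 3
  have hk : k ∉ tallPeaks h := fun hk => by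
    rw [flipOn_of_mem hk] at hl
    omega
  have hk2 : k + 2 ∉ tallPeaks h := fun hk2 => by
    rw [flipOn_of_mem hk2] at hr
    omega
  rw [flipOn_of_notMem hk] at hl
  rw [flipOn_of_notMem hk2] at hr
  exact (hh.mem_tallPeaks_of_isValley hff hax (isTurn_succ_iff.mpr ⟨hl, hr⟩)).elim hk hk2

end Image

/-- A Dyck path `μ` of semilength `n+1` lies in the image of the upward pop operator
`Pop^↑ (ν) = ν ⊔ ⋁{z : ν ⋖ z}` on `J(Φ⁺_{A_n})` if and only if `μ` has no consecutive
steps `ffrr` and touches the x-axis only at `(0,0)` and `(2n+2,0)`. -/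
theorem stmt_10 (n : ℕ) (μ : DyckPath (n + 1)) :
    (∃ ν : DyckPath (n + 1), IsLUB (insert ν {z | ν ⋖ z}) μ) ↔
      NoFFRR (n + 1) μ.val ∧ OnlyEndpointsOnAxis (n + 1) μ.val := by
  constructor
  · rintro ⟨ν, hν⟩
    obtain rfl := hν.unique ν.isLUB_pop
    exact ⟨noFFRR_flipOn_valleys _ _, ν.2.onlyEndpointsOnAxis_flipOn_valleys⟩
  · rintro ⟨hff, hax⟩
    let ν : DyckPath (n + 1) := ⟨flipOn (tallPeaks μ.1) (-1) μ.1, μ.2.flipOn_tallPeaks⟩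
    refine ⟨ν, ?_⟩
    convert ν.isLUB_pop
    apply Subtype.ext
    simp only [DyckPath.pop, DyckPath.raise, ν, μ.2.valleys_flipOn_tallPeaks hff hax]
    exact flipOn_flipOn_neg.symm
end

section
/- The formal power series ((xy+1)² + 4xy/(x−1))^(−1/2), expanded via the generalized binomial theorem, has coefficient of x^n y^k equal to ∑_{j=0}^{k} binomial(2j, j)·binomial(k+j, k−j)·binomial(n−k+j−1, n−k)·(−1)^(k−j). -/
/-!
With `w = xy + 1` and `z = xy/(x - 1)`, the binomial expansion of `(w² + 4z)^(-1/2)` is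
`w⁻¹ · B(-z/w²)`, where `B(t) = ∑ C(2j, j) tʲ`. Comparing `(1 - 4t) B'` with `2B` shows that
`B² (1 - 4t) = 1`, so the expansion squared times `w² + 4z` is `1`, which is the defining equation
once the denominator `x - 1` is cleared. Power series over `ℚ` form a domain, so the square root
is determined by its constant term. Since `-z/w²` is divisible by `y`, only the terms with `j ≤ k`
contribute to the coefficient of `xⁿyᵏ`, and each term `(xy)ʲ w^(-2j-1) (1 - x)^(-j)` is a series in
`xy` times a series in `x`, whose coefficients are binomial coefficients.
-/

open Finset

namespace PowerSeries

variable {R : Type*} [CommRing R]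

variable (R) in
noncomputable def centralBinomSeries : R⟦X⟧ :=
  mk fun n => (n.centralBinom : R)

theorem one_sub_four_X_mul_derivative_centralBinomSeries :
    (1 - 4 * X) * d⁄dX R (centralBinomSeries R) = 2 * centralBinomSeries R := by
  ext n
  rw [← map_ofNat C 4, ← map_ofNat C 2, sub_mul, one_mul, mul_assoc, map_sub, coeff_C_mul,
    coeff_C_mul]
  rcases n with _ | n
  · simp [centralBinomSeries, coeff_derivative, Nat.centralBinom]
  · have h := congrArg (Nat.cast (R := R)) (Nat.succ_mul_centralBinom_succ (n + 1))
    push_cast at h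
    simp only [coeff_succ_X_mul, coeff_derivative, centralBinomSeries, coeff_mk]
    push_cast
    linear_combination h

theorem centralBinomSeries_sq_mul_one_sub_four_X [IsAddTorsionFree R] :
    centralBinomSeries R ^ 2 * (1 - 4 * X) = 1 := by
  refine derivative.ext ?_ (by simp [centralBinomSeries, Nat.centralBinom])
  have h4 : d⁄dX R (1 - 4 * X) = -4 := by
    rw [← map_ofNat C 4, map_sub, derivative_one, Derivation.leibniz, derivative_C, derivative_X]
    simp
  rw [Derivation.leibniz, Derivation.leibniz_pow, h4, derivative_one, smul_eq_mul, smul_eq_mul,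
    nsmul_eq_mul]
  linear_combination (2 * centralBinomSeries R) *
    one_sub_four_X_mul_derivative_centralBinomSeries (R := R)

-- For `d = 0` truncated subtraction turns the right side into `if m = 0 then 1 else 0`.
theorem coeff_invOneSubPow (d m : ℕ) :
    coeff m (invOneSubPow R d : R⟦X⟧) = ((m + d - 1).choose m : R) := by
  rcases d with _ | d
  · rcases m with _ | m <;> simp [invOneSubPow_zero, coeff_one]
  · rw [invOneSubPow_val_succ_eq_mk_add_choose, coeff_mk, ← add_assoc, Nat.add_sub_cancel,
      Nat.choose_symm_add, add_comm]

theorem invOneSubPow_one_pow (d : ℕ) : invOneSubPow R 1 ^ d = invOneSubPow R d := by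
  rw [invOneSubPow_eq_inv_one_sub_pow, invOneSubPow_eq_inv_one_sub_pow, pow_one]

theorem invOneSubPow_one_mul_one_sub_X : (invOneSubPow R 1 : R⟦X⟧) * (1 - X) = 1 := by
  have h := (invOneSubPow R 1).val_inv
  rwa [invOneSubPow_inv_eq_one_sub_pow, pow_one] at h

theorem rescale_neg_one_invOneSubPow_one_mul_one_add_X :
    rescale (-1 : R) (invOneSubPow R 1 : R⟦X⟧) * (1 + X) = 1 := by
  have h := congrArg (rescale (-1 : R)) (invOneSubPow_one_mul_one_sub_X (R := R))
  rwa [map_mul, map_sub, map_one, rescale_X, map_neg, map_one, neg_one_mul, sub_neg_eq_add] at h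

end PowerSeries

namespace MvPowerSeries

variable {R : Type*} [CommRing R]

theorem hasSubst_of_X_dvd {σ : Type*} {i : σ} {a : MvPowerSeries σ R} (ha : X i ∣ a) :
    PowerSeries.HasSubst a := by
  obtain ⟨b, rfl⟩ := ha
  exact PowerSeries.HasSubst.of_constantCoeff_zero (by simp)

theorem coeff_mul_subst_of_X_dvd {σ : Type*} {i : σ} {a : MvPowerSeries σ R} (ha : X i ∣ a)
    (g : MvPowerSeries σ R) (f : PowerSeries R) (e : σ →₀ ℕ) :
    coeff e (g * f.subst a) =
      ∑ d ∈ range (e i + 1), PowerSeries.coeff d f * coeff e (g * a ^ d) := by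
  classical
  have hsum : ∀ e' ≤ e, coeff e' (f.subst a) =
      ∑ d ∈ range (e i + 1), PowerSeries.coeff d f * coeff e' (a ^ d) := by
    intro e' he'
    rw [PowerSeries.coeff_subst (hasSubst_of_X_dvd ha)]
    refine finsum_eq_sum_of_support_subset _ fun d hd => ?_
    rw [coe_range, Set.mem_Iio, Nat.lt_succ_iff]
    by_contra! hlt
    refine hd ?_
    simp only [X_pow_dvd_iff.mp (pow_dvd_pow_of_dvd ha d) e' (by grind [Finsupp.le_def]),
      smul_zero]
  rw [coeff_mul, sum_congr rfl fun p hp => by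
    rw [hsum p.2 (HasAntidiagonal.antidiagonal.snd_le hp), mul_sum], sum_comm]
  refine sum_congr rfl fun d _ => ?_
  rw [coeff_mul, mul_sum]
  exact sum_congr rfl fun p _ => by ring

theorem X_zero_mul_X_one_pow (m : ℕ) :
    (X 0 * X 1 : MvPowerSeries (Fin 2) R) ^ m =
      monomial (Finsupp.single 0 m + Finsupp.single 1 m) 1 := by
  rw [mul_pow, X_pow_eq, X_pow_eq, monomial_mul_monomial, one_mul]

theorem coeff_subst_X_zero_mul_X_one (p : PowerSeries R) (d : Fin 2 →₀ ℕ) :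
    coeff d (p.subst (X 0 * X 1 : MvPowerSeries (Fin 2) R)) =
      if d 0 = d 1 then PowerSeries.coeff (d 0) p else 0 := by
  classical
  rw [PowerSeries.coeff_subst (hasSubst_of_X_dvd (i := 0) (dvd_mul_right _ _)),
    finsum_eq_single _ (d 0)]
  · simp [X_zero_mul_X_one_pow, coeff_monomial, Finsupp.ext_iff, Fin.forall_fin_two, eq_comm]
  · intro m hm
    simp [X_zero_mul_X_one_pow, coeff_monomial, Finsupp.ext_iff, Fin.forall_fin_two]
    omega

theorem coeff_subst_X_zero (q : PowerSeries R) (d : Fin 2 →₀ ℕ) :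
    coeff d (q.subst (X 0 : MvPowerSeries (Fin 2) R)) =
      if d 1 = 0 then PowerSeries.coeff (d 0) q else 0 := by
  rw [PowerSeries.coeff_subst_single]
  simp [Finsupp.ext_iff, Fin.forall_fin_two, eq_comm]

theorem coeff_subst_X_zero_mul_X_one_mul_subst_X_zero (p q : PowerSeries R)
    (d : Fin 2 →₀ ℕ) :
    coeff d (p.subst (X 0 * X 1 : MvPowerSeries (Fin 2) R) * q.subst (X 0)) =
      if d 1 ≤ d 0 then PowerSeries.coeff (d 1) p * PowerSeries.coeff (d 0 - d 1) q else 0 := by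
  classical
  rw [coeff_mul]
  split_ifs with h
  · rw [sum_eq_single (Finsupp.single 0 (d 1) + Finsupp.single 1 (d 1),
      Finsupp.single 0 (d 0 - d 1))]
    · simp [coeff_subst_X_zero_mul_X_one, coeff_subst_X_zero]
    · rintro ⟨e₁, e₂⟩ he hne
      rw [HasAntidiagonal.mem_antidiagonal, Finsupp.ext_iff, Fin.forall_fin_two] at he
      simp only [coeff_subst_X_zero_mul_X_one, coeff_subst_X_zero]
      split_ifs <;> simp_all [Finsupp.ext_iff, Fin.forall_fin_two]
      omega
    · intro hn
      refine absurd ?_ hn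
      rw [HasAntidiagonal.mem_antidiagonal, Finsupp.ext_iff, Fin.forall_fin_two]
      simp
      omega
  · refine sum_eq_zero fun ⟨e₁, e₂⟩ he => ?_
    rw [HasAntidiagonal.mem_antidiagonal, Finsupp.ext_iff, Fin.forall_fin_two] at he
    simp only [coeff_subst_X_zero_mul_X_one, coeff_subst_X_zero]
    split_ifs <;> simp_all
    omega

end MvPowerSeries

namespace InvSqrtExpansion

open MvPowerSeries

variable (R : Type*) [CommRing R]

/-- `w⁻¹ = (xy + 1)⁻¹`. -/
noncomputable def wInv : MvPowerSeries (Fin 2) R :=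
  (PowerSeries.rescale (-1 : R) (PowerSeries.invOneSubPow R 1 : PowerSeries R)).subst
    (X 0 * X 1 : MvPowerSeries (Fin 2) R)

/-- `-z = xy / (1 - x)`. -/
noncomputable def negZ : MvPowerSeries (Fin 2) R :=
  X 0 * X 1 * (PowerSeries.invOneSubPow R 1 : PowerSeries R).subst (X 0 : MvPowerSeries (Fin 2) R)

/-- `∑ⱼ C(-1/2, j) w^(-1-2j) (4z)ʲ = w⁻¹ ∑ⱼ C(2j, j) (-z/w²)ʲ`. -/
noncomputable def expansion : MvPowerSeries (Fin 2) R :=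
  wInv R * (PowerSeries.centralBinomSeries R).subst (negZ R * wInv R ^ 2)

variable {R}

theorem wInv_mul : wInv R * (X 0 * X 1 + 1) = 1 := by
  have h := congrArg (PowerSeries.substAlgHom (R := R)
      (hasSubst_of_X_dvd (i := 0) (dvd_mul_right (X 0 : MvPowerSeries (Fin 2) R) (X 1))))
    (PowerSeries.rescale_neg_one_invOneSubPow_one_mul_one_add_X (R := R))
  rwa [map_mul, map_add, map_one, PowerSeries.substAlgHom_X, PowerSeries.coe_substAlgHom,
    add_comm] at h

theorem subst_invOneSubPow_one_mul_one_sub_X_zero :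
    (PowerSeries.invOneSubPow R 1 : PowerSeries R).subst (X 0 : MvPowerSeries (Fin 2) R) *
      (1 - X 0) = 1 := by
  have h := congrArg (PowerSeries.substAlgHom (R := R) (PowerSeries.HasSubst.X (S := R) (0 : Fin 2)))
    (PowerSeries.invOneSubPow_one_mul_one_sub_X (R := R))
  rwa [map_mul, map_sub, map_one, PowerSeries.substAlgHom_X, PowerSeries.coe_substAlgHom] at h

theorem expansion_sq_mul [IsAddTorsionFree R] :
    expansion R ^ 2 * ((X 0 * X 1 + 1) ^ 2 * (X 0 - 1) + 4 * X 0 * X 1) = X 0 - 1 := by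
  have hρ : PowerSeries.HasSubst (negZ R * wInv R ^ 2) :=
    hasSubst_of_X_dvd (i := 0) ⟨X 1 * (PowerSeries.invOneSubPow R 1 : PowerSeries R).subst
      (X 0 : MvPowerSeries (Fin 2) R) * wInv R ^ 2, by rw [negZ]; ring⟩
  have hB := congrArg (PowerSeries.substAlgHom (R := R) hρ)
    (PowerSeries.centralBinomSeries_sq_mul_one_sub_four_X (R := R))
  rw [map_mul, map_pow, map_sub, map_one, map_mul, map_ofNat, PowerSeries.substAlgHom_X,
    PowerSeries.coe_substAlgHom] at hB
  rw [expansion]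
  generalize (PowerSeries.centralBinomSeries R).subst (negZ R * wInv R ^ 2) = B at hB ⊢
  rw [negZ] at hB
  linear_combination (X 0 - 1) * hB
    + B ^ 2 * (X 0 - 1) * (wInv R * (X 0 * X 1 + 1) + 1) * wInv_mul (R := R)
    - 4 * X 0 * X 1 * wInv R ^ 2 * B ^ 2 * subst_invOneSubPow_one_mul_one_sub_X_zero (R := R)

theorem wInv_mul_pow_eq_subst_mul_subst (j : ℕ) :
    wInv R * (negZ R * wInv R ^ 2) ^ j =
      (PowerSeries.X ^ j * PowerSeries.rescale (-1 : R)
          (PowerSeries.invOneSubPow R (2 * j + 1) : PowerSeries R)).subst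
          (X 0 * X 1 : MvPowerSeries (Fin 2) R) *
        (PowerSeries.invOneSubPow R j : PowerSeries R).subst (X 0 : MvPowerSeries (Fin 2) R) := by
  have hu := hasSubst_of_X_dvd (i := 0) (dvd_mul_right (X 0 : MvPowerSeries (Fin 2) R) (X 1))
  have hx := PowerSeries.HasSubst.X (S := R) (0 : Fin 2)
  rw [← PowerSeries.invOneSubPow_one_pow (2 * j + 1), ← PowerSeries.invOneSubPow_one_pow j,
    Units.val_pow_eq_pow_val, Units.val_pow_eq_pow_val, map_pow,
    ← PowerSeries.coe_substAlgHom hu, ← PowerSeries.coe_substAlgHom hx, map_mul, map_pow, map_pow,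
    map_pow, PowerSeries.substAlgHom_X, negZ, wInv, PowerSeries.coe_substAlgHom hu,
    PowerSeries.coe_substAlgHom hx]
  ring

theorem coeff_wInv_mul_pow (j : ℕ) (d : Fin 2 →₀ ℕ) :
    coeff d (wInv R * (negZ R * wInv R ^ 2) ^ j) =
      if d 1 ≤ d 0 ∧ j ≤ d 1 then
        (-1) ^ (d 1 - j) * ((d 1 + j).choose (d 1 - j) : R) *
          ((d 0 - d 1 + j - 1).choose (d 0 - d 1) : R)
      else 0 := by
  rw [wInv_mul_pow_eq_subst_mul_subst, coeff_subst_X_zero_mul_X_one_mul_subst_X_zero,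
    PowerSeries.coeff_X_pow_mul', PowerSeries.coeff_rescale, PowerSeries.coeff_invOneSubPow,
    PowerSeries.coeff_invOneSubPow]
  by_cases h1 : d 1 ≤ d 0 <;> by_cases h2 : j ≤ d 1 <;> simp only [h1, h2, and_self,
    and_false, false_and, if_true, if_false, zero_mul]
  rw [show d 1 - j + (2 * j + 1) - 1 = d 1 + j by omega, add_comm (d 0 - d 1)]

theorem coeff_expansion (n k : ℕ) :
    coeff (Finsupp.single 0 n + Finsupp.single 1 k) (expansion R) =
      ∑ j ∈ range (k + 1),
        ((2 * j).choose j : R) * ((k + j).choose (k - j) : R) *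
          (if n < k then 0 else ((n - k + j - 1).choose (n - k) : R)) * (-1 : R) ^ (k - j) := by
  have hdvd : (X 1 : MvPowerSeries (Fin 2) R) ∣ negZ R * wInv R ^ 2 :=
    ⟨X 0 * (PowerSeries.invOneSubPow R 1 : PowerSeries R).subst (X 0 : MvPowerSeries (Fin 2) R) *
      wInv R ^ 2, by rw [negZ]; ring⟩
  have h0 : (Finsupp.single 0 n + Finsupp.single 1 k : Fin 2 →₀ ℕ) 0 = n := by simp
  have h1 : (Finsupp.single 0 n + Finsupp.single 1 k : Fin 2 →₀ ℕ) 1 = k := by simp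
  rw [expansion, coeff_mul_subst_of_X_dvd hdvd]
  refine sum_congr (by rw [h1]) fun j hj => ?_
  rw [mem_range] at hj
  rw [coeff_wInv_mul_pow, h0, h1, PowerSeries.centralBinomSeries, PowerSeries.coeff_mk,
    Nat.centralBinom_eq_two_mul_choose]
  by_cases hnk : n < k
  · simp [hnk, not_le.mpr hnk]
  · rw [if_pos ⟨not_lt.mp hnk, by omega⟩, if_neg hnk]
    ring

theorem constantCoeff_expansion : constantCoeff (expansion R) = 1 := by
  simpa using coeff_expansion (R := R) 0 0

end InvSqrtExpansion

/-- The power series `J = ((xy+1)² + 4xy/(x−1))^{−1/2} ∈ ℚ[[x,y]]` (characterized by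
`J²·((xy+1)²(x−1)+4xy) = x−1` together with constant term `1`, the branch given by the
generalized binomial theorem) has coefficient of `xⁿyᵏ` equal to
`∑_{j=0}^{k} C(2j,j)·C(k+j,k−j)·C(n−k+j−1, n−k)·(−1)^{k−j}`, binomials vanishing
outside their range. -/
theorem stmt_13 (J : MvPowerSeries (Fin 2) ℚ)
    (hJ : J ^ 2 * ((MvPowerSeries.X (0 : Fin 2) * MvPowerSeries.X 1 + 1) ^ 2 *
            (MvPowerSeries.X 0 - 1) + 4 * MvPowerSeries.X 0 * MvPowerSeries.X 1) =
          MvPowerSeries.X 0 - 1)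
    (hJ0 : MvPowerSeries.constantCoeff J = 1)
    (n k : ℕ) :
    MvPowerSeries.coeff (Finsupp.single 0 n + Finsupp.single 1 k) J =
      ∑ j ∈ Finset.range (k + 1),
        ((2 * j).choose j : ℚ) * ((k + j).choose (k - j) : ℚ) *
          (if n < k then 0 else ((n - k + j - 1).choose (n - k) : ℚ)) *
          (-1 : ℚ) ^ (k - j) := by
  have hsq : J ^ 2 = InvSqrtExpansion.expansion ℚ ^ 2 :=
    mul_right_cancel₀ (fun h => by simpa using congrArg MvPowerSeries.constantCoeff h)
      (hJ.trans InvSqrtExpansion.expansion_sq_mul.symm)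
  obtain hJe | hJe := sq_eq_sq_iff_eq_or_eq_neg.mp hsq
  · rw [hJe, InvSqrtExpansion.coeff_expansion]
  · have h := congrArg MvPowerSeries.constantCoeff hJe
    rw [hJ0, map_neg, InvSqrtExpansion.constantCoeff_expansion] at h
    norm_num at h
end

section
/- For n ≥ 2 and 1 ≤ j ≤ n−1, let x be the permutation of {1,…,2n} defined by x_1 = 1; x_i = 2n−j+i−2 for 2 ≤ i ≤ j+1; x_i = i for j+2 ≤ i ≤ 2n−j−1; x_i = j+i−2n+2 for 2n−j ≤ i ≤ 2n−1; and x_{2n} = 2n. Then x is a signed permutation (x_i + x_{2n+1−i} = 2n+1 for all i), and the permutation y obtained from x by reversing each maximal ascending run of x has the property that reversing each maximal descending run of y recovers x. -/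
/-! The descents of `x` are exactly at `j + 1` and `2n − j − 1`, so reversing its ascending runs
reverses the three blocks of positions `[1, j + 1]`, `[j + 2, 2n − j − 1]`, `[2n − j, 2n]`.
The resulting word is descending on the same blocks, with ascents exactly at the block
boundaries, so reversing its descending runs reverses the same blocks again and gives back `x`.
Being an involution, `x` is a bijection of `[1, 2n]`. -/

/-- The last descent position `d < i` of the word `x₁ … x_L` (`0` if none). -/
noncomputable def lastDescBefore (L : ℕ) (x : ℕ → ℕ) (i : ℕ) : ℕ :=
  sSup ({0} ∪ {d | d < i ∧ 1 ≤ d ∧ d < L ∧ x (d + 1) < x d})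

/-- The first descent position `d ≥ i` of the word `x₁ … x_L` (`L` if none). -/
noncomputable def nextDescFrom (L : ℕ) (x : ℕ → ℕ) (i : ℕ) : ℕ :=
  sInf ({L} ∪ {d | i ≤ d ∧ d < L ∧ x (d + 1) < x d})

/-- The word obtained from `x₁ … x_L` by reversing each maximal ascending run in place:
position `i` lies in the maximal ascending run `[s+1, e]` where `s` is the last descent
before `i` and `e` the next descent from `i`, and it receives the entry `x_{s+1+e−i}`. -/
noncomputable def revAscRuns (L : ℕ) (x : ℕ → ℕ) : ℕ → ℕ := fun i =>
  x (lastDescBefore L x i + 1 + nextDescFrom L x i - i)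

/-- The last ascent position `d < i` of the word (`0` if none). -/
noncomputable def lastAscBefore (L : ℕ) (x : ℕ → ℕ) (i : ℕ) : ℕ :=
  sSup ({0} ∪ {d | d < i ∧ 1 ≤ d ∧ d < L ∧ x d < x (d + 1)})

/-- The first ascent position `d ≥ i` of the word (`L` if none). -/
noncomputable def nextAscFrom (L : ℕ) (x : ℕ → ℕ) (i : ℕ) : ℕ :=
  sInf ({L} ∪ {d | i ≤ d ∧ d < L ∧ x d < x (d + 1)})

/-- The word obtained by reversing each maximal descending run in place. -/
noncomputable def revDescRuns (L : ℕ) (x : ℕ → ℕ) : ℕ → ℕ := fun i =>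
  x (lastAscBefore L x i + 1 + nextAscFrom L x i - i)

/-- The position whose entry lands at `i` when the maximal runs of a word of length `L` are
reversed, the runs being cut after the positions `d ∈ [1, L)` with `P d`. -/
noncomputable def runReflect (L : ℕ) (P : ℕ → Prop) (i : ℕ) : ℕ :=
  sSup ({0} ∪ {d | d < i ∧ 1 ≤ d ∧ d < L ∧ P d}) + 1 +
    sInf ({L} ∪ {d | i ≤ d ∧ d < L ∧ P d}) - i

theorem revAscRuns_eq_runReflect (L : ℕ) (x : ℕ → ℕ) (i : ℕ) :
    revAscRuns L x i = x (runReflect L (fun d => x (d + 1) < x d) i) := rfl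

theorem revDescRuns_eq_runReflect (L : ℕ) (x : ℕ → ℕ) (i : ℕ) :
    revDescRuns L x i = x (runReflect L (fun d => x d < x (d + 1)) i) := rfl

section Runs

variable {L s e i : ℕ} {P : ℕ → Prop}

theorem runReflect_eq_of_mem_run (hsi : s < i) (hie : i ≤ e) (heL : e ≤ L)
    (hs : s = 0 ∨ (1 ≤ s ∧ P s)) (he : e = L ∨ P e)
    (hrun : ∀ d, s < d → d < e → ¬ P d) :
    runReflect L P i = s + 1 + e - i := by
  have hsup : sSup ({0} ∪ {d | d < i ∧ 1 ≤ d ∧ d < L ∧ P d}) = s := by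
    refine IsGreatest.csSup_eq ⟨?_, ?_⟩
    · rcases hs with rfl | ⟨h1, hP⟩
      · exact Or.inl rfl
      · exact Or.inr ⟨hsi, h1, by omega, hP⟩
    · rintro d (rfl | ⟨hdi, -, -, hP⟩)
      · exact Nat.zero_le s
      · by_contra! hsd
        exact hrun d hsd (by omega) hP
  have hinf : sInf ({L} ∪ {d | i ≤ d ∧ d < L ∧ P d}) = e := by
    refine IsLeast.csInf_eq ⟨?_, ?_⟩
    · by_cases heq : e = L
      · exact Or.inl heq
      · exact Or.inr ⟨hie, by omega, he.resolve_left heq⟩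
    · rintro d (rfl | ⟨hid, -, hP⟩)
      · exact heL
      · by_contra! hde
        exact hrun d (by omega) hde hP
  rw [runReflect, hsup, hinf]

end Runs

def revThreeBlocks (L a b i : ℕ) : ℕ :=
  if i ≤ a then a + 1 - i else if i ≤ b then a + b + 1 - i else L + b + 1 - i

section ThreeBlocks

variable {L a b i : ℕ}

theorem revThreeBlocks_mem_Icc (hab : a ≤ b) (hbL : b ≤ L) (hi : i ∈ Set.Icc 1 L) :
    revThreeBlocks L a b i ∈ Set.Icc 1 L := by
  simp only [Set.mem_Icc, revThreeBlocks] at *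
  split_ifs <;> omega

theorem revThreeBlocks_revThreeBlocks (hab : a ≤ b) (hi : i ∈ Set.Icc 1 L) :
    revThreeBlocks L a b (revThreeBlocks L a b i) = i := by
  simp only [Set.mem_Icc, revThreeBlocks] at *
  split_ifs <;> omega

theorem runReflect_eq_revThreeBlocks {P : ℕ → Prop}
    (hP : ∀ d, 1 ≤ d → d < L → (P d ↔ d = a ∨ d = b))
    (ha : 1 ≤ a) (hab : a ≤ b) (hbL : b < L) (hi : i ∈ Set.Icc 1 L) :
    runReflect L P i = revThreeBlocks L a b i := by
  obtain ⟨hi1, hiL⟩ := hi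
  have hrun : ∀ s e, (∀ d, s < d → d < e → d ≠ a ∧ d ≠ b) → ∀ d, s < d → d < e → 1 ≤ d →
      d < L → ¬ P d := fun s e h d hsd hde h1 hdL hPd =>
    ((hP d h1 hdL).1 hPd).elim (h d hsd hde).1 (h d hsd hde).2
  unfold revThreeBlocks
  split_ifs with hia hib
  · rw [runReflect_eq_of_mem_run hi1 hia (hab.trans hbL.le) (Or.inl rfl)
      (Or.inr ((hP a ha (by omega)).2 (Or.inl rfl)))
      (fun d hsd hde => hrun 0 a (fun _ _ _ => by omega) d hsd hde hsd (by omega))]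
    omega
  · rw [runReflect_eq_of_mem_run (by omega) hib hbL.le
      (Or.inr ⟨ha, (hP a ha (by omega)).2 (Or.inl rfl)⟩)
      (Or.inr ((hP b (by omega) hbL).2 (Or.inr rfl)))
      (fun d hsd hde => hrun a b (fun _ _ _ => by omega) d hsd hde (by omega) (by omega))]
    omega
  · rw [runReflect_eq_of_mem_run (by omega) hiL le_rfl
      (Or.inr ⟨by omega, (hP b (by omega) hbL).2 (Or.inr rfl)⟩) (Or.inl rfl)
      (fun d hsd hde => hrun b L (fun _ _ _ => by omega) d hsd hde (by omega) hde)]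
    omega

/-- Both run reversals permute positions by the involution `revThreeBlocks L a b`. -/
theorem revDescRuns_revAscRuns_eq_self {x : ℕ → ℕ}
    (ha : 1 ≤ a) (hab : a ≤ b) (hbL : b < L)
    (hdesc : ∀ d, 1 ≤ d → d < L → (x (d + 1) < x d ↔ d = a ∨ d = b))
    (hasc : ∀ d, 1 ≤ d → d < L →
      (x (revThreeBlocks L a b d) < x (revThreeBlocks L a b (d + 1)) ↔ d = a ∨ d = b))
    (hi : i ∈ Set.Icc 1 L) :
    revDescRuns L (revAscRuns L x) i = x i := by
  have hy : ∀ k ∈ Set.Icc 1 L, revAscRuns L x k = x (revThreeBlocks L a b k) := fun k hk => by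
    rw [revAscRuns_eq_runReflect, runReflect_eq_revThreeBlocks hdesc ha hab hbL hk]
  have hyasc : ∀ d, 1 ≤ d → d < L →
      (revAscRuns L x d < revAscRuns L x (d + 1) ↔ d = a ∨ d = b) := fun d h1 hdL => by
    rw [hy d ⟨h1, hdL.le⟩, hy (d + 1) ⟨by omega, hdL⟩]
    exact hasc d h1 hdL
  rw [revDescRuns_eq_runReflect, runReflect_eq_revThreeBlocks hyasc ha hab hbL hi,
    hy _ (revThreeBlocks_mem_Icc hab hbL.le hi), revThreeBlocks_revThreeBlocks hab hi]

end ThreeBlocks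

/-- The permutation `1, 2n−j, …, 2n−1, j+2, …, 2n−j−1, 2, …, j+1, 2n`. -/
def swapOuterBlocks (n j i : ℕ) : ℕ :=
  if i = 1 then 1 else if i ≤ j + 1 then 2 * n - j + i - 2
    else if i ≤ 2 * n - j - 1 then i else if i ≤ 2 * n - 1 then j + i + 2 - 2 * n
    else 2 * n

section SwapOuterBlocks

variable {n j : ℕ}

theorem swapOuterBlocks_mapsTo (hj : j ≤ n - 1) :
    Set.MapsTo (swapOuterBlocks n j) (Set.Icc 1 (2 * n)) (Set.Icc 1 (2 * n)) := by
  intro i hi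
  simp only [Set.mem_Icc, swapOuterBlocks] at *
  split_ifs <;> omega

theorem swapOuterBlocks_swapOuterBlocks (hj : j ≤ n - 1) {i : ℕ} (hi : i ∈ Set.Icc 1 (2 * n)) :
    swapOuterBlocks n j (swapOuterBlocks n j i) = i := by
  simp only [Set.mem_Icc] at hi
  unfold swapOuterBlocks
  split_ifs <;> omega

theorem swapOuterBlocks_add_swapOuterBlocks_symm (hj : j ≤ n - 1) {i : ℕ} (hi1 : 1 ≤ i)
    (hi2 : i ≤ 2 * n) :
    swapOuterBlocks n j i + swapOuterBlocks n j (2 * n + 1 - i) = 2 * n + 1 := by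
  unfold swapOuterBlocks
  split_ifs <;> omega

theorem swapOuterBlocks_descent_iff (hj1 : 1 ≤ j) (hj2 : j ≤ n - 1) {d : ℕ} (hd1 : 1 ≤ d)
    (hd2 : d < 2 * n) :
    swapOuterBlocks n j (d + 1) < swapOuterBlocks n j d ↔ d = j + 1 ∨ d = 2 * n - j - 1 := by
  unfold swapOuterBlocks
  split_ifs <;> omega

theorem swapOuterBlocks_revThreeBlocks (hj : j ≤ n - 1) {i : ℕ} (hi : i ∈ Set.Icc 1 (2 * n)) :
    swapOuterBlocks n j (revThreeBlocks (2 * n) (j + 1) (2 * n - j - 1) i) =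
      if i ≤ j then 2 * n - i else if i = j + 1 then 1
      else if i ≤ 2 * n - j - 1 then 2 * n + 1 - i
      else if i = 2 * n - j then 2 * n else 2 * n + 2 - i := by
  simp only [Set.mem_Icc] at hi
  unfold revThreeBlocks
  split_ifs <;> simp only [swapOuterBlocks] <;> split_ifs <;> omega

theorem swapOuterBlocks_revThreeBlocks_ascent_iff (hj1 : 1 ≤ j) (hj2 : j ≤ n - 1) {d : ℕ}
    (hd1 : 1 ≤ d) (hd2 : d < 2 * n) :
    swapOuterBlocks n j (revThreeBlocks (2 * n) (j + 1) (2 * n - j - 1) d) <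
        swapOuterBlocks n j (revThreeBlocks (2 * n) (j + 1) (2 * n - j - 1) (d + 1)) ↔
      d = j + 1 ∨ d = 2 * n - j - 1 := by
  rw [swapOuterBlocks_revThreeBlocks hj2 ⟨hd1, hd2.le⟩,
    swapOuterBlocks_revThreeBlocks hj2 ⟨by omega, hd2⟩]
  split_ifs <;> omega

end SwapOuterBlocks

theorem stmt_15_general (n j : ℕ) (hj1 : 1 ≤ j) (hj2 : j ≤ n - 1)
    (x : ℕ → ℕ)
    (hx : ∀ i, x i = if i = 1 then 1 else if i ≤ j + 1 then 2 * n - j + i - 2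
        else if i ≤ 2 * n - j - 1 then i else if i ≤ 2 * n - 1 then j + i + 2 - 2 * n
        else 2 * n) :
    Set.BijOn x (Set.Icc 1 (2 * n)) (Set.Icc 1 (2 * n)) ∧
    (∀ i, 1 ≤ i → i ≤ 2 * n → x i + x (2 * n + 1 - i) = 2 * n + 1) ∧
    (∀ i, 1 ≤ i → i ≤ 2 * n → revDescRuns (2 * n) (revAscRuns (2 * n) x) i = x i) := by
  obtain rfl : x = swapOuterBlocks n j := funext hx
  have hinv : Set.InvOn (swapOuterBlocks n j) (swapOuterBlocks n j)
      (Set.Icc 1 (2 * n)) (Set.Icc 1 (2 * n)) :=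
    ⟨fun _ hi => swapOuterBlocks_swapOuterBlocks hj2 hi,
      fun _ hi => swapOuterBlocks_swapOuterBlocks hj2 hi⟩
  refine ⟨hinv.bijOn (swapOuterBlocks_mapsTo hj2) (swapOuterBlocks_mapsTo hj2),
    fun i hi1 hi2 => swapOuterBlocks_add_swapOuterBlocks_symm hj2 hi1 hi2,
    fun i hi1 hi2 => ?_⟩
  exact revDescRuns_revAscRuns_eq_self (by omega) (by omega) (by omega)
    (fun d => swapOuterBlocks_descent_iff hj1 hj2)
    (fun d => swapOuterBlocks_revThreeBlocks_ascent_iff hj1 hj2) ⟨hi1, hi2⟩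

/-- For `n ≥ 2` and `1 ≤ j ≤ n−1`, the permutation `x` of `{1,…,2n}` given by `x₁ = 1`,
`x_i = 2n−j+i−2` for `2 ≤ i ≤ j+1`, `x_i = i` for `j+2 ≤ i ≤ 2n−j−1`,
`x_i = j+i−2n+2` for `2n−j ≤ i ≤ 2n−1`, `x_{2n} = 2n` is a signed permutation
(`x_i + x_{2n+1−i} = 2n+1`), and reversing each maximal descending run of the word `y`
obtained by reversing each maximal ascending run of `x` recovers `x`. -/
theorem stmt_15 (n j : ℕ) (hn : 2 ≤ n) (hj1 : 1 ≤ j) (hj2 : j ≤ n - 1)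
    (x : ℕ → ℕ)
    (hx : ∀ i, x i = if i = 1 then 1 else if i ≤ j + 1 then 2 * n - j + i - 2
        else if i ≤ 2 * n - j - 1 then i else if i ≤ 2 * n - 1 then j + i + 2 - 2 * n
        else 2 * n) :
    Set.BijOn x (Set.Icc 1 (2 * n)) (Set.Icc 1 (2 * n)) ∧
    (∀ i, 1 ≤ i → i ≤ 2 * n → x i + x (2 * n + 1 - i) = 2 * n + 1) ∧
    (∀ i, 1 ≤ i → i ≤ 2 * n → revDescRuns (2 * n) (revAscRuns (2 * n) x) i = x i) :=
  stmt_15_general n j hj1 hj2 x hx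
end
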